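/- Each of the eight even positive definite lattices A_1(2), A_1(3), A_1(4), 2A_1(2), A_2(2), A_2(3), A_3(2), D_4(2) satisfies the Norm_2 condition: for every coset c̄ ∈ L∨/L of the discriminant group there exists a representative h_c ∈ c̄ with (h_c, h_c) ≤ 2. -/

import Mathlib

/-!
Framework for modular forms on orthogonal groups O(2,n), following
H. Wang, "On some free algebras of orthogonal modular forms II".

A lattice `M = 2U ⊕ L(-1)` is modelled by its Gram matrix `MGram l GrL` on
`ℤ^(l+4)`, where `GrL` is the Gram matrix of the even positive definite
lattice `L`.  Modular forms live on the chosen connected component `domA`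
of the affine cone.
-/

noncomputable section

open Complex Filter Topology Set

namespace OMF

abbrev UMat (n : ℕ) := (Matrix (Fin n) (Fin n) ℤ)ˣ

/-- The `ℤ`-valued bilinear form attached to a Gram matrix. -/
def Bz {n : ℕ} (G : Matrix (Fin n) (Fin n) ℤ) (v w : Fin n → ℤ) : ℤ :=
  ∑ i, ∑ j, v i * G i j * w j

/-- The `ℂ`-bilinear extension of the form attached to a Gram matrix. -/
def Bf {n : ℕ} (G : Matrix (Fin n) (Fin n) ℤ) (v w : Fin n → ℂ) : ℂ :=
  ∑ i, ∑ j, v i * (G i j : ℂ) * w j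

/-- The `ℚ`-bilinear extension of the form attached to a Gram matrix. -/
def Bq {n : ℕ} (G : Matrix (Fin n) (Fin n) ℤ) (v w : Fin n → ℚ) : ℚ :=
  ∑ i, ∑ j, v i * (G i j : ℚ) * w j

def zc {n : ℕ} (r : Fin n → ℤ) : Fin n → ℂ := fun i => (r i : ℂ)
def qc {n : ℕ} (r : Fin n → ℚ) : Fin n → ℂ := fun i => (r i : ℂ)
def qz {n : ℕ} (r : Fin n → ℤ) : Fin n → ℚ := fun i => (r i : ℚ)

/-- `e2 t = exp(2πi t)`. -/
def e2 (t : ℂ) : ℂ := Complex.exp (2 * (Real.pi : ℂ) * Complex.I * t)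

/-- Gram matrix of `M = 2U ⊕ L(-1)`: the first four coordinates carry two
hyperbolic planes `U`, the last `l` coordinates carry `L(-1)`. -/
def MGram (l : ℕ) (GrL : Matrix (Fin l) (Fin l) ℤ) :
    Matrix (Fin (l+4)) (Fin (l+4)) ℤ :=
  Matrix.of fun i j =>
    if h : 4 ≤ (i : ℕ) ∧ 4 ≤ (j : ℕ) then
      - GrL ⟨(i:ℕ) - 4, by have hi := i.isLt; omega⟩ ⟨(j:ℕ) - 4, by have hj := j.isLt; omega⟩
    else if ((i:ℕ) = 0 ∧ (j:ℕ) = 1) ∨ ((i:ℕ) = 1 ∧ (j:ℕ) = 0)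
      ∨ ((i:ℕ) = 2 ∧ (j:ℕ) = 3) ∨ ((i:ℕ) = 3 ∧ (j:ℕ) = 2) then 1 else 0

/-- The affine cone `{Z : (Z,Z) = 0, (Z,Z̄) > 0}` (both connected components). -/
def cone {n : ℕ} (G : Matrix (Fin n) (Fin n) ℤ) : Set (Fin n → ℂ) :=
  {Z | Bf G Z Z = 0 ∧ 0 < (Bf G Z (fun i => starRingEnd ℂ (Z i))).re}

/-- The point of the affine cone corresponding to the tube domain point
`(τ, 𝔷, ω)` at the standard 1-dimensional cusp determined by `2U`. -/
def tubePt (l : ℕ) (GrL : Matrix (Fin l) (Fin l) ℤ)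
    (τ : ℂ) (z : Fin l → ℂ) (ω : ℂ) : Fin (l+4) → ℂ := fun i =>
  if (i:ℕ) = 0 then (∑ a, ∑ b, (GrL a b : ℂ) * z a * z b) / 2 - τ * ω
  else if (i:ℕ) = 1 then 1
  else if (i:ℕ) = 2 then τ
  else if (i:ℕ) = 3 then ω
  else if h : 4 ≤ (i:ℕ) then z ⟨(i:ℕ) - 4, by have hi := i.isLt; omega⟩ else 0

/-- The chosen connected component `𝒜(M)⁺` of the affine cone of `2U ⊕ L(-1)`,
namely the one containing the image of the tube domain. -/
def domA (l : ℕ) (GrL : Matrix (Fin l) (Fin l) ℤ) : Set (Fin (l+4) → ℂ) :=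
  connectedComponentIn (cone (MGram l GrL)) (tubePt l GrL Complex.I 0 Complex.I)

/-- The action of an integral matrix on `ℂ^n`. -/
def actOn {n : ℕ} (P : UMat n) (Z : Fin n → ℂ) : Fin n → ℂ :=
  ((P : Matrix (Fin n) (Fin n) ℤ).map (Int.cast : ℤ → ℂ)).mulVec Z

lemma actOn_one {n : ℕ} (Z : Fin n → ℂ) : actOn 1 Z = Z := by
  unfold actOn
  rw [Units.val_one, Matrix.map_one (Int.cast) Int.cast_zero Int.cast_one,
    Matrix.one_mulVec]

lemma actOn_mul {n : ℕ} (P Q : UMat n) (Z : Fin n → ℂ) :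
    actOn (P * Q) Z = actOn P (actOn Q Z) := by
  unfold actOn
  rw [Units.val_mul, Matrix.mulVec_mulVec]
  have h : ((P : Matrix (Fin n) (Fin n) ℤ) * (Q : Matrix (Fin n) (Fin n) ℤ)).map
        (Int.cast : ℤ → ℂ)
      = (P : Matrix (Fin n) (Fin n) ℤ).map (Int.cast : ℤ → ℂ)
        * (Q : Matrix (Fin n) (Fin n) ℤ).map (Int.cast : ℤ → ℂ) :=
    Matrix.map_mul (f := Int.castRingHom ℂ)
  rw [h]

/-- The subgroup `O⁺(M)` of the integral orthogonal group of `G`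
preserving the chosen component `A₀` of the affine cone. -/
def orthoPlus {n : ℕ} (G : Matrix (Fin n) (Fin n) ℤ) (A₀ : Set (Fin n → ℂ)) :
    Subgroup (UMat n) where
  carrier := {P | (∀ v w, Bf G (actOn P v) (actOn P w) = Bf G v w) ∧ actOn P '' A₀ = A₀}
  one_mem' := by
    refine ⟨fun v w => by rw [actOn_one, actOn_one], ?_⟩
    have h : actOn (1 : UMat n) = id := funext actOn_one
    rw [h, Set.image_id]
  mul_mem' := by
    rintro P Q ⟨hP1, hP2⟩ ⟨hQ1, hQ2⟩
    have h : actOn (P * Q) = actOn P ∘ actOn Q := funext (actOn_mul P Q)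
    refine ⟨fun v w => ?_, ?_⟩
    · rw [actOn_mul, actOn_mul, hP1, hQ1]
    · rw [h, Set.image_comp, hQ2, hP2]
  inv_mem' := by
    rintro P ⟨hP1, hP2⟩
    have hcan : ∀ v, actOn P (actOn P⁻¹ v) = v := by
      intro v
      rw [← actOn_mul, mul_inv_cancel, actOn_one]
    have hcan' : ∀ v, actOn P⁻¹ (actOn P v) = v := by
      intro v
      rw [← actOn_mul, inv_mul_cancel, actOn_one]
    refine ⟨fun v w => ?_, ?_⟩
    · calc Bf G (actOn P⁻¹ v) (actOn P⁻¹ w)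
          = Bf G (actOn P (actOn P⁻¹ v)) (actOn P (actOn P⁻¹ w)) := (hP1 _ _).symm
        _ = Bf G v w := by rw [hcan, hcan]
    · conv_lhs => rw [← hP2]
      rw [← Set.image_comp]
      have h : actOn P⁻¹ ∘ actOn P = id := funext hcan'
      rw [h, Set.image_id]

/-- `r` is a primitive lattice vector. -/
def IsPrimVec {n : ℕ} (r : Fin n → ℤ) : Prop :=
  ∀ d : ℤ, (∀ i, d ∣ r i) → IsUnit d

/-- `div(r) = d`: `d` is the positive generator of the ideal `{(r,x) : x ∈ M}`. -/
def DivIs {n : ℕ} (G : Matrix (Fin n) (Fin n) ℤ) (r : Fin n → ℤ) (d : ℤ) : Prop :=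
  0 < d ∧ (∀ x : Fin n → ℤ, d ∣ Bz G r x) ∧ (∃ x : Fin n → ℤ, Bz G r x = d)

/-- `P` acts on `ℂ^n` as the reflection `σ_r : x ↦ x - (2(r,x)/(r,r)) r`. -/
def IsReflVec {n : ℕ} (G : Matrix (Fin n) (Fin n) ℤ) (r : Fin n → ℤ) (P : UMat n) : Prop :=
  ∀ x : Fin n → ℂ,
    (Bz G r r : ℂ) • actOn P x = (Bz G r r : ℂ) • x - (2 * Bf G (zc r) x) • zc r

/-- The subgroup generated by the reflections attached to a set `S` of vectors. -/
def reflGroup {n : ℕ} (G : Matrix (Fin n) (Fin n) ℤ) (S : Set (Fin n → ℤ)) :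
    Subgroup (UMat n) :=
  Subgroup.closure {P | ∃ r ∈ S, IsReflVec G r P}

/-- `Γ` is generated by reflections in primitive negative norm vectors. -/
def ReflGenerated {n : ℕ} (G : Matrix (Fin n) (Fin n) ℤ) (Γ : Subgroup (UMat n)) : Prop :=
  ∃ S : Set (Fin n → ℤ),
    (∀ r ∈ S, IsPrimVec r ∧ Bz G r r < 0) ∧ Γ = reflGroup G S

/-- `F` is holomorphic on `A₀`: near every point of `A₀` it extends to a
holomorphic function on an open neighbourhood in `ℂ^n`. -/
def HoloOn {n : ℕ} (A₀ : Set (Fin n → ℂ)) (F : (Fin n → ℂ) → ℂ) : Prop :=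
  ∀ Z ∈ A₀, ∃ U : Set (Fin n → ℂ), IsOpen U ∧ Z ∈ U ∧
    ∃ Fe : (Fin n → ℂ) → ℂ, DifferentiableOn ℂ Fe U ∧ Set.EqOn Fe F (A₀ ∩ U)

/-- A modular form of weight `k` and character `χ` for `Γ`, as a holomorphic
homogeneous function of degree `-k` on the component `A₀` of the affine cone. -/
def IsModularForm {n : ℕ} (A₀ : Set (Fin n → ℂ)) (Γ : Subgroup (UMat n))
    (k : ℤ) (χ : Γ →* ℂˣ) (F : (Fin n → ℂ) → ℂ) : Prop :=
  HoloOn A₀ F ∧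
  (∀ t : ℂ, t ≠ 0 → ∀ Z ∈ A₀, F (t • Z) = t ^ (-k) * F Z) ∧
  (∀ g : Γ, ∀ Z ∈ A₀, F (actOn (g : UMat n) Z) = ((χ g : ℂˣ) : ℂ) * F Z)

/-- The graded algebra of modular forms for `Γ` with trivial character is the
free polynomial algebra over `ℂ` on `Fs`, where `Fs i` has weight `wts i`. -/
def FreelyGen {n m : ℕ} (A₀ : Set (Fin n → ℂ)) (Γ : Subgroup (UMat n))
    (Fs : Fin m → ((Fin n → ℂ) → ℂ)) (wts : Fin m → ℤ) : Prop :=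
  (∀ i, IsModularForm A₀ Γ (wts i) 1 (Fs i)) ∧
  (∀ P : MvPolynomial (Fin m) ℂ,
    (∀ Z ∈ A₀, MvPolynomial.eval (fun i => Fs i Z) P = 0) → P = 0) ∧
  (∀ (k : ℤ) (F : (Fin n → ℂ) → ℂ), IsModularForm A₀ Γ k 1 F →
    ∃ P : MvPolynomial (Fin m) ℂ, P.IsWeightedHomogeneous wts k ∧
      ∀ Z ∈ A₀, F Z = MvPolynomial.eval (fun i => Fs i Z) P)

/-- The Jacobian determinant (Rankin–Cohen–Ibukiyama operator) of `l+3` modular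
forms on a lattice of signature `(2, l+2)`: the determinant whose rows are the
gradient of the quadratic form and the gradients of local holomorphic
extensions of the forms. -/
def IsJacobianOf (l : ℕ) (GrL : Matrix (Fin l) (Fin l) ℤ) (A₀ : Set (Fin (l+4) → ℂ))
    (Fs : Fin (l+3) → ((Fin (l+4) → ℂ) → ℂ)) (J : (Fin (l+4) → ℂ) → ℂ) : Prop :=
  ∀ Z ∈ A₀, ∃ U : Set (Fin (l+4) → ℂ), IsOpen U ∧ Z ∈ U ∧
    ∃ Fe : Fin (l+3) → ((Fin (l+4) → ℂ) → ℂ),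
      (∀ i, DifferentiableOn ℂ (Fe i) U ∧ Set.EqOn (Fe i) (Fs i) (A₀ ∩ U)) ∧
      J Z = Matrix.det (Matrix.of (Fin.cons
        (fun j => 2 * ∑ kk, ((MGram l GrL) j kk : ℂ) * Z kk)
        (fun i j => fderiv ℂ (Fe i) Z (Pi.single j 1))))

/-- `F` vanishes exactly on the rational quadratic divisors attached to the
vectors in `R`, with multiplicity one (simple zeros at points lying on exactly
one mirror). -/
def DivisorExactly {n : ℕ} (G : Matrix (Fin n) (Fin n) ℤ) (A₀ : Set (Fin n → ℂ))
    (R : Set (Fin n → ℤ)) (F : (Fin n → ℂ) → ℂ) : Prop :=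
  (∀ Z ∈ A₀, (F Z = 0 ↔ ∃ r ∈ R, Bf G (zc r) Z = 0)) ∧
  (∀ Z ∈ A₀, ∀ r ∈ R, Bf G (zc r) Z = 0 →
    (∀ r' ∈ R, Bf G (zc r') Z = 0 → r' = r ∨ r' = -r) →
    ∃ U : Set (Fin n → ℂ), IsOpen U ∧ Z ∈ U ∧
      ∃ Fe : (Fin n → ℂ) → ℂ, DifferentiableOn ℂ Fe U ∧ Set.EqOn Fe F (A₀ ∩ U) ∧
        ∃ v : Fin n → ℂ, Bf G Z v = 0 ∧ fderiv ℂ Fe Z v ≠ 0)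

/-- `ψ` is the leading Fourier–Jacobi coefficient of `F`, appearing with
exponent `ξ^t` at the standard 1-dimensional cusp determined by `2U`. -/
def FJLimit (l : ℕ) (GrL : Matrix (Fin l) (Fin l) ℤ) (F : (Fin (l+4) → ℂ) → ℂ)
    (t : ℚ) (ψ : ℂ → (Fin l → ℂ) → ℂ) : Prop :=
  ∀ τ : ℂ, 0 < τ.im → ∀ z : Fin l → ℂ, ∀ x : ℝ,
    Tendsto (fun s : ℝ =>
        F (tubePt l GrL τ z (x + s * Complex.I)) *
          Complex.exp (-(2 * (Real.pi : ℂ) * Complex.I) * (t : ℂ) * (x + s * Complex.I)))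
      atTop (𝓝 (ψ τ z))

/-- The Dedekind eta function, via the pentagonal number theorem. -/
def Eta (τ : ℂ) : ℂ :=
  ∑' k : ℤ, (-1 : ℂ) ^ k *
    Complex.exp ((Real.pi : ℂ) * Complex.I * τ * (((6 * k - 1) ^ 2 : ℤ) : ℂ) / 12)

/-- The Jacobi theta function
`θ(τ,z) = q^{1/8}(ζ^{1/2}-ζ^{-1/2}) ∏_{n≥1} (1-q^nζ)(1-q^nζ^{-1})(1-q^n)`. -/
def Theta (τ z : ℂ) : ℂ :=
  ∑' n : ℤ, (-1 : ℂ) ^ n *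
    Complex.exp (2 * (Real.pi : ℂ) * Complex.I *
      ((((2 * n + 1) ^ 2 : ℤ) : ℂ) / 8 * τ + (((2 * n + 1 : ℤ)) : ℂ) / 2 * z))

/-- The normalized Eisenstein series `E₄`. -/
def E4 (τ : ℂ) : ℂ :=
  1 + 240 * ∑' n : ℕ, (∑ d ∈ (n + 1).divisors, (d : ℂ) ^ 3) * e2 ((n + 1 : ℕ) * τ)

/-- The normalized Eisenstein series `E₆`. -/
def E6 (τ : ℂ) : ℂ :=
  1 - 504 * ∑' n : ℕ, (∑ d ∈ (n + 1).divisors, (d : ℂ) ^ 5) * e2 ((n + 1 : ℕ) * τ)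

/-- A weak Jacobi form of weight `k` and index `m` (trivial character) for the
positive definite lattice with Gram matrix `GrL`, with Fourier coefficients `c`. -/
structure IsWeakJF (l : ℕ) (GrL : Matrix (Fin l) (Fin l) ℤ) (k : ℤ) (m : ℚ)
    (φ : ℂ → (Fin l → ℂ) → ℂ) (c : ℤ → (Fin l → ℚ) → ℂ) : Prop where
  holo : DifferentiableOn ℂ (fun p : ℂ × (Fin l → ℂ) => φ p.1 p.2)
    {p : ℂ × (Fin l → ℂ) | 0 < p.1.im}
  modular : ∀ a b cc d : ℤ, a * d - b * cc = 1 → ∀ τ : ℂ, 0 < τ.im → ∀ z : Fin l → ℂ,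
    φ (((a : ℂ) * τ + (b : ℂ)) / ((cc : ℂ) * τ + (d : ℂ)))
        ((((cc : ℂ) * τ + (d : ℂ))⁻¹) • z)
      = ((cc : ℂ) * τ + (d : ℂ)) ^ k *
        Complex.exp ((Real.pi : ℂ) * Complex.I * (m : ℂ) * (cc : ℂ) * Bf GrL z z /
          ((cc : ℂ) * τ + (d : ℂ))) * φ τ z
  elliptic : ∀ x y : Fin l → ℤ, ∀ τ : ℂ, 0 < τ.im → ∀ z : Fin l → ℂ,
    φ τ (z + τ • zc x + zc y)
      = Complex.exp (-((Real.pi : ℂ) * Complex.I) * (m : ℂ) *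
          (Bf GrL (zc x) (zc x) * τ + 2 * Bf GrL (zc x) z)) * φ τ z
  expansion : ∀ τ : ℂ, 0 < τ.im → ∀ z : Fin l → ℂ,
    HasSum (fun p : ℤ × (Fin l → ℚ) =>
      c p.1 p.2 * e2 ((p.1 : ℂ) * τ + Bf GrL (qc p.2) z)) (φ τ z)
  support : ∀ (n : ℤ) (ℓ : Fin l → ℚ), c n ℓ ≠ 0 →
    0 ≤ n ∧ ∀ x : Fin l → ℤ, ∃ j : ℤ, Bq GrL ℓ (qz x) = (j : ℚ)

/-- A holomorphic Jacobi form of weight `k` and index `m` with character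
`v_η^{Dm} × ν^{2m}` for the lattice with Gram matrix `GrL`, with Fourier
coefficients `c`. -/
structure IsJFeta (l : ℕ) (GrL : Matrix (Fin l) (Fin l) ℤ) (k : ℤ) (m : ℕ) (Dm : ℕ)
    (φ : ℂ → (Fin l → ℂ) → ℂ) (c : ℚ → (Fin l → ℚ) → ℂ) : Prop where
  holo : DifferentiableOn ℂ (fun p : ℂ × (Fin l → ℂ) => φ p.1 p.2)
    {p : ℂ × (Fin l → ℂ) | 0 < p.1.im}
  modular : ∀ a b cc d : ℤ, a * d - b * cc = 1 → ∀ τ : ℂ, 0 < τ.im → ∀ z : Fin l → ℂ,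
    φ (((a : ℂ) * τ + (b : ℂ)) / ((cc : ℂ) * τ + (d : ℂ)))
        ((((cc : ℂ) * τ + (d : ℂ))⁻¹) • z) * (Eta τ) ^ Dm
      = (Eta (((a : ℂ) * τ + (b : ℂ)) / ((cc : ℂ) * τ + (d : ℂ)))) ^ Dm *
        ((cc : ℂ) * τ + (d : ℂ)) ^ (k - (Dm : ℤ) / 2) *
        Complex.exp ((Real.pi : ℂ) * Complex.I * (m : ℂ) * (cc : ℂ) * Bf GrL z z /
          ((cc : ℂ) * τ + (d : ℂ))) * φ τ z
  elliptic : ∀ x y : Fin l → ℤ, ∀ τ : ℂ, 0 < τ.im → ∀ z : Fin l → ℂ,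
    φ τ (z + τ • zc x + zc y)
      = Complex.exp (-((Real.pi : ℂ) * Complex.I) * (m : ℂ) *
          (Bf GrL (zc x) (zc x) * τ + 2 * Bf GrL (zc x) z)) * φ τ z
  expansion : ∀ τ : ℂ, 0 < τ.im → ∀ z : Fin l → ℂ,
    HasSum (fun p : ℚ × (Fin l → ℚ) =>
      c p.1 p.2 * e2 ((p.1 : ℂ) * τ + Bf GrL (qc p.2) z)) (φ τ z)
  support : ∀ (n : ℚ) (ℓ : Fin l → ℚ), c n ℓ ≠ 0 →
    (∃ j : ℤ, n = (Dm : ℚ) / 24 + (j : ℚ)) ∧ 0 ≤ n ∧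
    0 ≤ 2 * n * (m : ℚ) - Bq GrL ℓ ℓ ∧
    ∀ x : Fin l → ℤ, ∃ j : ℤ, Bq GrL ℓ (qz x) = (j : ℚ)

/-- Invariance under the Weyl group, i.e. under all reflections in norm 2
roots of the lattice. -/
def WeylInv (l : ℕ) (GrL : Matrix (Fin l) (Fin l) ℤ) (φ : ℂ → (Fin l → ℂ) → ℂ) : Prop :=
  ∀ r : Fin l → ℤ, (∑ i, ∑ j, r i * GrL i j * r j) = 2 → ∀ (τ : ℂ) (z : Fin l → ℂ),
    φ τ (z - (Bf GrL (zc r) z) • zc r) = φ τ z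

/-- Invariance under the full integral orthogonal group of the lattice. -/
def OrthInv (l : ℕ) (GrL : Matrix (Fin l) (Fin l) ℤ) (φ : ℂ → (Fin l → ℂ) → ℂ) : Prop :=
  ∀ P : Matrix (Fin l) (Fin l) ℤ, P.transpose * GrL * P = GrL → ∀ (τ : ℂ) (z : Fin l → ℂ),
    φ τ ((P.map (Int.cast : ℤ → ℂ)).mulVec z) = φ τ z

/-- The `Norm₂` condition: every coset of the discriminant group `L∨/L` has a
representative of norm at most `2`. -/
def Norm2Cond (l : ℕ) (GrL : Matrix (Fin l) (Fin l) ℤ) : Prop :=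
  ∀ y : Fin l → ℚ, (∀ x : Fin l → ℤ, ∃ j : ℤ, Bq GrL y (qz x) = (j : ℚ)) →
    ∃ x : Fin l → ℤ, Bq GrL (y + qz x) (y + qz x) ≤ 2

end OMF

namespace Stmt18Aux

open OMF

/-- Decidable finite form of the `Norm₂` condition. -/
def KeyProp (l N : ℕ) (G : Matrix (Fin l) (Fin l) ℤ) : Prop :=
  ∀ r : Fin l → Fin N, (∀ i, (N : ℤ) ∣ ∑ j, G i j * ((r j : ℕ) : ℤ)) →
    ∃ x : Fin l → Fin 2,
      Bz G (fun i => ((r i : ℕ) : ℤ) + (N : ℤ) * (((x i : ℕ) : ℤ) - 1))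
           (fun i => ((r i : ℕ) : ℤ) + (N : ℤ) * (((x i : ℕ) : ℤ) - 1)) ≤ 2 * (N : ℤ) ^ 2

instance (l N : ℕ) (G : Matrix (Fin l) (Fin l) ℤ) : Decidable (KeyProp l N G) := by
  unfold KeyProp Bz; infer_instance

lemma norm2_of_key (l N : ℕ) (hN : 0 < N) (G B : Matrix (Fin l) (Fin l) ℤ)
    (hsym : ∀ i j, G i j = G j i)
    (hBG : B * G = (N : ℤ) • 1)
    (key : KeyProp l N G) : Norm2Cond l G := by
  have hN0 : (0 : ℤ) < (N : ℤ) := by exact_mod_cast hN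
  have hNne : (N : ℚ) ≠ 0 := by positivity
  intro y hy
  choose m hm using fun i => hy (Pi.single i 1)
  have hm' : ∀ i, ∑ a, y a * (G a i : ℚ) = (m i : ℚ) := by
    intro i
    have h := hm i
    simp only [Bq, qz, Pi.single_apply] at h
    rw [← h]
    refine Finset.sum_congr rfl fun a _ => ?_
    rw [Finset.sum_eq_single i]
    · simp
    · intro b _ hb; simp [hb]
    · simp
  have hBG' : ∀ j a, ∑ i, B j i * G i a = if j = a then (N : ℤ) else 0 := by
    intro j a
    have h := congrFun (congrFun hBG j) a
    simpa [Matrix.mul_apply, Matrix.one_apply, Matrix.smul_apply, mul_ite] using h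
  set k : Fin l → ℤ := fun j => ∑ i, B j i * m i with hkdef
  have hk : ∀ j, (k j : ℚ) = (N : ℚ) * y j := by
    intro j
    calc (k j : ℚ) = ∑ i, (B j i : ℚ) * (m i : ℚ) := by push_cast [hkdef]; rfl
      _ = ∑ i, ∑ a, y a * ((B j i : ℚ) * (G a i : ℚ)) := by
          refine Finset.sum_congr rfl fun i _ => ?_
          rw [← hm' i, Finset.mul_sum]
          exact Finset.sum_congr rfl fun a _ => by ring
      _ = ∑ a, ∑ i, y a * ((B j i : ℚ) * (G a i : ℚ)) := Finset.sum_comm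
      _ = ∑ a, y a * ((∑ i, B j i * G i a : ℤ) : ℚ) := by
          refine Finset.sum_congr rfl fun a _ => ?_
          push_cast
          rw [Finset.mul_sum]
          exact Finset.sum_congr rfl fun i _ => by rw [hsym a i]
      _ = ∑ a, y a * ((if j = a then (N : ℤ) else 0 : ℤ) : ℚ) := by
          refine Finset.sum_congr rfl fun a _ => by rw [hBG' j a]
      _ = (N : ℚ) * y j := by
          rw [Finset.sum_eq_single j]
          · simp [mul_comm]
          · intro b _ hb; simp [Ne.symm hb]
          · simp
  have hdvd : ∀ i, (N : ℤ) ∣ ∑ j, G i j * k j := by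
    intro i
    refine ⟨m i, ?_⟩
    have hq : ((∑ j, G i j * k j : ℤ) : ℚ) = (((N : ℤ) * m i : ℤ) : ℚ) := by
      push_cast
      calc ∑ j, (G i j : ℚ) * (k j : ℚ) = ∑ j, (G i j : ℚ) * ((N : ℚ) * y j) := by
            exact Finset.sum_congr rfl fun j _ => by rw [hk j]
        _ = (N : ℚ) * ∑ j, y j * (G j i : ℚ) := by
            rw [Finset.mul_sum]
            exact Finset.sum_congr rfl fun j _ => by rw [hsym i j]; ring
        _ = (N : ℚ) * (m i : ℚ) := by rw [hm' i]
    exact_mod_cast hq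
  have hrprop : ∀ j, 0 ≤ k j % (N : ℤ) ∧ k j % (N : ℤ) < (N : ℤ) := fun j =>
    ⟨Int.emod_nonneg _ (ne_of_gt hN0), Int.emod_lt_of_pos _ hN0⟩
  set r : Fin l → Fin N := fun j => ⟨(k j % (N : ℤ)).toNat, by
    have h := hrprop j; omega⟩ with hrdef
  have hr : ∀ j, ((r j : ℕ) : ℤ) = k j % (N : ℤ) := by
    intro j; have h := hrprop j
    simp only [hrdef]
    omega
  have hdvd' : ∀ i, (N : ℤ) ∣ ∑ j, G i j * ((r j : ℕ) : ℤ) := by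
    intro i
    have heq : ∑ j, G i j * ((r j : ℕ) : ℤ)
        = (∑ j, G i j * k j) - ∑ j, G i j * ((N : ℤ) * (k j / (N : ℤ)))  := by
      rw [← Finset.sum_sub_distrib]
      refine Finset.sum_congr rfl fun j _ => ?_
      rw [hr j]
      have h := Int.mul_ediv_add_emod (k j) (N : ℤ)
      linear_combination (G i j) * h
    rw [heq]
    exact dvd_sub (hdvd i) (Finset.dvd_sum fun j _ => ⟨G i j * (k j / (N : ℤ)), by ring⟩)
  obtain ⟨x, hx⟩ := key r hdvd'
  set v : Fin l → ℤ := fun j => ((r j : ℕ) : ℤ) + (N : ℤ) * (((x j : ℕ) : ℤ) - 1) with hvdef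
  set w : Fin l → ℤ := fun j => ((x j : ℕ) : ℤ) - 1 - k j / (N : ℤ) with hwdef
  have hvw : ∀ j, k j + (N : ℤ) * w j = v j := by
    intro j
    have h := Int.mul_ediv_add_emod (k j) (N : ℤ)
    simp only [hvdef, hwdef, hr j]
    linear_combination -h
  refine ⟨w, ?_⟩
  have hyw : ∀ j, (y + qz w) j = (v j : ℚ) / (N : ℚ) := by
    intro j
    have hv : (v j : ℚ) = (k j : ℚ) + (N : ℚ) * (w j : ℚ) := by
      rw [← hvw j]; push_cast; ring
    simp only [Pi.add_apply, qz]
    rw [eq_div_iff hNne, hv, hk j]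
    ring
  have hBqv : Bq G (y + qz w) (y + qz w) = ((Bz G v v : ℤ) : ℚ) / ((N : ℚ) ^ 2) := by
    simp only [Bq, Bz, hyw]
    push_cast
    rw [Finset.sum_div]
    refine Finset.sum_congr rfl fun i _ => ?_
    rw [Finset.sum_div]
    refine Finset.sum_congr rfl fun j _ => ?_
    ring
  rw [hBqv, div_le_iff₀ (by positivity)]
  have : ((Bz G v v : ℤ) : ℚ) ≤ ((2 * (N : ℤ) ^ 2 : ℤ) : ℚ) := by exact_mod_cast hx
  push_cast at this ⊢
  linarith

end Stmt18Aux

namespace Stmt18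

open OMF

set_option maxRecDepth 100000

/-- Statement: each of the eight even positive definite lattices
`A₁(2), A₁(3), A₁(4), 2A₁(2), A₂(2), A₂(3), A₃(2), D₄(2)` satisfies the
`Norm₂` condition: every coset of `L∨/L` has a representative of norm `≤ 2`.
(`A₃` is realized as `D₃` and `A₃(2)`, `D₄(2)` via the Gram matrices of the
standard bases `e₁-e₂, e₂-e₃, e₂+e₃` resp. `e₁-e₂, e₂-e₃, e₃-e₄, e₃+e₄`.) -/
theorem statement_18 :
    -- `A₁(2)`
    Norm2Cond 1 !![4] ∧
    -- `A₁(3)`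
    Norm2Cond 1 !![6] ∧
    -- `A₁(4)`
    Norm2Cond 1 !![8] ∧
    -- `2A₁(2)`
    Norm2Cond 2 !![4, 0; 0, 4] ∧
    -- `A₂(2)`
    Norm2Cond 2 !![4, -2; -2, 4] ∧
    -- `A₂(3)`
    Norm2Cond 2 !![6, -3; -3, 6] ∧
    -- `A₃(2)`
    Norm2Cond 3 !![4, -2, -2; -2, 4, 0; -2, 0, 4] ∧
    -- `D₄(2)`
    Norm2Cond 4 !![4, -2, 0, 0; -2, 4, -2, -2; 0, -2, 4, 0; 0, -2, 0, 4] := by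
  refine ⟨?_, ?_, ?_, ?_, ?_, ?_, ?_, ?_⟩
  · exact Stmt18Aux.norm2_of_key 1 4 (by norm_num) !![4] !![1]
      (by intro i j; fin_cases i <;> fin_cases j <;> rfl) (by decide) (by decide)
  · exact Stmt18Aux.norm2_of_key 1 6 (by norm_num) !![6] !![1]
      (by intro i j; fin_cases i <;> fin_cases j <;> rfl) (by decide) (by decide)
  · exact Stmt18Aux.norm2_of_key 1 8 (by norm_num) !![8] !![1]
      (by intro i j; fin_cases i <;> fin_cases j <;> rfl) (by decide) (by decide)
  · exact Stmt18Aux.norm2_of_key 2 4 (by norm_num) !![4, 0; 0, 4] !![1, 0; 0, 1]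
      (by intro i j; fin_cases i <;> fin_cases j <;> rfl) (by decide) (by decide)
  · exact Stmt18Aux.norm2_of_key 2 6 (by norm_num) !![4, -2; -2, 4] !![2, 1; 1, 2]
      (by intro i j; fin_cases i <;> fin_cases j <;> rfl) (by decide) (by decide)
  · exact Stmt18Aux.norm2_of_key 2 9 (by norm_num) !![6, -3; -3, 6] !![2, 1; 1, 2]
      (by intro i j; fin_cases i <;> fin_cases j <;> rfl) (by decide) (by decide)
  · exact Stmt18Aux.norm2_of_key 3 8 (by norm_num) !![4, -2, -2; -2, 4, 0; -2, 0, 4]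
      !![4, 2, 2; 2, 3, 1; 2, 1, 3] (by intro i j; fin_cases i <;> fin_cases j <;> rfl) (by decide) (by decide)
  · exact Stmt18Aux.norm2_of_key 4 4 (by norm_num)
      !![4, -2, 0, 0; -2, 4, -2, -2; 0, -2, 4, 0; 0, -2, 0, 4]
      !![2, 2, 1, 1; 2, 4, 2, 2; 1, 2, 2, 1; 1, 2, 1, 2]
      (by intro i j; fin_cases i <;> fin_cases j <;> rfl) (by decide) (by decide)


end Stmt18
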